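/- In the lower-indexed Behrens algebra R, for every natural number m and every word (a_1, ..., a_m) of natural numbers, the image of the monomial Q_{a_1} Q_{a_2} ... Q_{a_m} lies in the F_2-linear span of the images of the admissible monomials of the same length m. In particular, the images of the admissible monomials (over all lengths, including the empty monomial 1) span R as an F_2-vector space. -/

import Mathlib

/-!
The lower-indexed Behrens algebra `R` is the quotient of the free unital associative
`F₂`-algebra on generators `Q a` (`a : ℕ`) by the two-sided ideal generated by the
Behrens relations
  `Q a * Q b = ∑_{c ≥ 0, 3c < a+2b-1} C(a+b-2c-2, b-c) • Q (a+2b-2c) * Q c`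
for `a ≤ b + 1`, where the binomial coefficient is taken mod 2 and declared zero
unless `0 ≤ b - c ≤ a + b - 2c - 2` (as integers).

STATEMENT 0: the image of any length-`m` monomial lies in the `F₂`-span of the images
of the admissible monomials of length `m`; in particular the admissible monomials
(over all lengths) span `R`.
-/

noncomputable section

open scoped BigOperators

/-- The generator `Q a` of the free algebra. -/
def Q (a : ℕ) : FreeAlgebra (ZMod 2) ℕ := FreeAlgebra.ι (ZMod 2) a

/-- The mod 2 binomial coefficient `C(a+b-2c-2, b-c)`, taken to be `0` unless the
(integer) arguments are nonnegative. -/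
def behrensCoeff (a b c : ℕ) : ZMod 2 :=
  if c ≤ b ∧ 2 * c + 2 ≤ a + b then ((a + b - 2 * c - 2).choose (b - c) : ZMod 2) else 0

/-- The right hand side of the Behrens relation for `Q a * Q b`:
`∑_{c ≥ 0, 3c < a + 2b - 1} C(a+b-2c-2, b-c) • Q (a+2b-2c) * Q c`. -/
def behrensRHS (a b : ℕ) : FreeAlgebra (ZMod 2) ℕ :=
  ∑ c ∈ Finset.range (a + 2 * b),
    if 3 * c + 1 < a + 2 * b then behrensCoeff a b c • (Q (a + 2 * b - 2 * c) * Q c) else 0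

/-- The Behrens relations, for all `a ≤ b + 1`. -/
inductive BehrensRel : FreeAlgebra (ZMod 2) ℕ → FreeAlgebra (ZMod 2) ℕ → Prop
  | mk (a b : ℕ) (h : a ≤ b + 1) : BehrensRel (Q a * Q b) (behrensRHS a b)

/-- The lower-indexed Behrens algebra: the quotient of the free algebra by the two-sided
ideal generated by the Behrens relations. -/
abbrev BehrensAlgebra : Type := RingQuot BehrensRel

/-- The quotient map from the free algebra to the Behrens algebra. -/
def toBehrens : FreeAlgebra (ZMod 2) ℕ →ₐ[ZMod 2] BehrensAlgebra :=
  RingQuot.mkAlgHom (ZMod 2) BehrensRel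

/-- The monomial `Q a₁ * Q a₂ * ⋯ * Q aₘ` associated to a word `(a₁, …, aₘ)`;
the empty word gives `1`. -/
def mon (L : List ℕ) : FreeAlgebra (ZMod 2) ℕ := (L.map Q).prod

/-- A word `(a₁, …, aₘ)` is admissible if `aᵢ ≥ aᵢ₊₁ + 2` for all `i < m`. -/
def Admissible (L : List ℕ) : Prop := L.Chain' (fun a b => b + 2 ≤ a)

/-! ### Auxiliary machinery -/

/-- The weight `∑ aᵢ 2^(i-1)` of a word; invariant under the Behrens rewriting. -/
def wt : List ℕ → ℕ
  | [] => 0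
  | a :: L => a + 2 * wt L

/-- Base-`B` value of a word, first entry most significant. -/
def val (B : ℕ) : List ℕ → ℕ
  | [] => 0
  | a :: L => a * B ^ L.length + val B L

lemma wt_append (X L : List ℕ) : wt (X ++ L) = wt X + 2 ^ X.length * wt L := by
  induction X with
  | nil => simp [wt]
  | cons x X ih =>
    have h : wt (x :: (X ++ L)) = x + 2 * wt (X ++ L) := rfl
    have h2 : wt (x :: X) = x + 2 * wt X := rfl
    simp only [List.cons_append, h, h2, ih, List.length_cons, pow_succ]
    ring

lemma mem_le_wt {a : ℕ} {L : List ℕ} (h : a ∈ L) : a ≤ wt L := by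
  induction L with
  | nil => simp at h
  | cons x L ih =>
    rcases List.mem_cons.mp h with h | h
    · subst h; simp only [wt]; omega
    · have := ih h; simp only [wt]; omega

lemma val_append (B : ℕ) (X L : List ℕ) :
    val B (X ++ L) = val B X * B ^ L.length + val B L := by
  induction X with
  | nil => simp [val]
  | cons x X ih =>
    have h : val B (x :: (X ++ L)) = x * B ^ (X ++ L).length + val B (X ++ L) := rfl
    have h2 : val B (x :: X) = x * B ^ X.length + val B X := rfl
    simp only [List.cons_append, h, h2, ih, List.length_append, List.length_cons, pow_add]
    ring

lemma val_lt (B : ℕ) (L : List ℕ) (h : ∀ a ∈ L, a < B) : val B L < B ^ L.length := by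
  induction L with
  | nil => simp [val]
  | cons x L ih =>
    have hx := h x (List.mem_cons_self)
    have hv := ih (fun a ha => h a (List.mem_cons_of_mem _ ha))
    have h1 : x * B ^ L.length + val B L < (x + 1) * B ^ L.length := by nlinarith
    have h2 : (x + 1) * B ^ L.length ≤ B * B ^ L.length := Nat.mul_le_mul_right _ hx
    simp only [val, List.length_cons, pow_succ]
    calc x * B ^ L.length + val B L < (x + 1) * B ^ L.length := h1
      _ ≤ B * B ^ L.length := h2
      _ = B ^ L.length * B := mul_comm _ _

lemma val_lt_val (B : ℕ) (X s t : List ℕ) (u v : ℕ) (hlen : s.length = t.length)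
    (hs : ∀ a ∈ s, a < B) (huv : u < v) :
    val B (X ++ u :: s) < val B (X ++ v :: t) := by
  rw [val_append, val_append]
  simp only [val, List.length_cons, hlen]
  have h1 : val B s < B ^ s.length := val_lt B s hs
  rw [hlen] at h1
  have h3 : (u + 1) * B ^ t.length ≤ v * B ^ t.length := Nat.mul_le_mul_right _ huv
  nlinarith [Nat.zero_le (val B t)]

lemma mon_append_pair (X Y : List ℕ) (a b : ℕ) :
    mon (X ++ a :: b :: Y) = mon X * (Q a * Q b * mon Y) := by
  simp [mon, mul_assoc]

/-- Any inadmissible word contains an adjacent inadmissible pair. -/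
lemma exists_bad : ∀ L : List ℕ, ¬ Admissible L →
    ∃ X a b Y, L = X ++ a :: b :: Y ∧ a ≤ b + 1
  | [], h => absurd List.isChain_nil h
  | [x], h => absurd (List.isChain_singleton x) h
  | a :: b :: T, h => by
    by_cases hab : b + 2 ≤ a
    · have hT : ¬ Admissible (b :: T) := fun hc => h (List.isChain_cons_cons.mpr ⟨hab, hc⟩)
      obtain ⟨X, a', b', Y, hL, hr⟩ := exists_bad (b :: T) hT
      exact ⟨a :: X, a', b', Y, by rw [List.cons_append, ← hL], hr⟩
    · exact ⟨[], a, b, T, rfl, by omega⟩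

/-- The Behrens rewriting rule, applied in the middle of a monomial. -/
lemma behrens_rewrite (X Y : List ℕ) (a b : ℕ) (h : a ≤ b + 1) :
    toBehrens (mon (X ++ a :: b :: Y)) =
    ∑ c ∈ Finset.range (a + 2 * b),
      (if 3 * c + 1 < a + 2 * b then behrensCoeff a b c else 0) •
        toBehrens (mon (X ++ (a + 2 * b - 2 * c) :: c :: Y)) := by
  have hq : toBehrens (Q a * Q b) = toBehrens (behrensRHS a b) :=
    RingQuot.mkAlgHom_rel _ (BehrensRel.mk a b h)
  rw [mon_append_pair, map_mul, map_mul, ← mul_assoc, hq, behrensRHS, map_sum,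
    Finset.mul_sum, Finset.sum_mul]
  refine Finset.sum_congr rfl fun c _ => ?_
  split_ifs with h1
  · rw [map_smul, mul_smul_comm, smul_mul_assoc]
    congr 1
    rw [mon_append_pair]
    simp only [map_mul, mul_assoc]
  · simp

/-- The span of admissible monomials of length `m`. -/
def spanAdm (m : ℕ) : Submodule (ZMod 2) BehrensAlgebra :=
  Submodule.span (ZMod 2)
    {x : BehrensAlgebra | ∃ L' : List ℕ, L'.length = m ∧ Admissible L' ∧
      x = toBehrens (mon L')}

lemma key (m W : ℕ) : ∀ n (L : List ℕ), L.length = m → wt L = W →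
    (W + 1) ^ m - val (W + 1) L ≤ n → toBehrens (mon L) ∈ spanAdm m := by
  intro n
  induction n with
  | zero =>
    intro L hlen hwt hle
    exfalso
    have hlt : val (W + 1) L < (W + 1) ^ m := by
      rw [← hlen]
      exact val_lt _ _ fun a ha => by have := mem_le_wt ha; omega
    omega
  | succ n ih =>
    intro L hlen hwt hle
    by_cases hadm : Admissible L
    · exact Submodule.subset_span ⟨L, hlen, hadm, rfl⟩
    obtain ⟨X, a, b, Y, hL, hab⟩ := exists_bad L hadm
    subst hL
    rw [behrens_rewrite X Y a b hab]
    refine Submodule.sum_mem _ fun c _ => ?_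
    by_cases hc : (if 3 * c + 1 < a + 2 * b then behrensCoeff a b c else 0) = 0
    · rw [hc, zero_smul]; exact Submodule.zero_mem _
    refine Submodule.smul_mem _ _ ?_
    have h1 : 3 * c + 1 < a + 2 * b := by by_contra h; rw [if_neg h] at hc; exact hc rfl
    rw [if_pos h1] at hc
    have h2 : c ≤ b ∧ 2 * c + 2 ≤ a + b := by
      by_contra h
      rw [behrensCoeff, if_neg h] at hc
      exact hc rfl
    obtain ⟨hcb, hc2⟩ := h2
    have hclt : c < b := by omega
    -- bounds on entries of the old word
    have hbd : ∀ x ∈ X ++ a :: b :: Y, x ≤ W := fun x hx => hwt ▸ mem_le_wt hx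
    -- new word data
    have hlen' : (X ++ (a + 2 * b - 2 * c) :: c :: Y).length = m := by
      simp only [List.length_append, List.length_cons] at hlen ⊢; omega
    have hwt' : wt (X ++ (a + 2 * b - 2 * c) :: c :: Y) = W := by
      have hinner : a + 2 * b - 2 * c + 2 * (c + 2 * wt Y) = a + 2 * (b + 2 * wt Y) := by
        omega
      rw [wt_append] at hwt ⊢
      simp only [wt] at hwt ⊢
      rw [hinner]
      exact hwt
    have hval : val (W + 1) (X ++ a :: b :: Y) <
        val (W + 1) (X ++ (a + 2 * b - 2 * c) :: c :: Y) := by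
      refine val_lt_val (W + 1) X (b :: Y) (c :: Y) a (a + 2 * b - 2 * c) rfl ?_ (by omega)
      intro x hx
      have : x ∈ X ++ a :: b :: Y := by
        rcases List.mem_cons.mp hx with h | h
        · subst h; simp
        · simp [h]
      have := hbd x this; omega
    refine ih _ hlen' hwt' ?_
    omega

lemma span_mon_top :
    Submodule.span (ZMod 2) (Set.range mon) = (⊤ : Submodule (ZMod 2) (FreeAlgebra (ZMod 2) ℕ)) := by
  rw [eq_top_iff]
  have h1 : Algebra.adjoin (ZMod 2) (Set.range (FreeAlgebra.ι (ZMod 2) : ℕ → _)) = ⊤ :=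
    FreeAlgebra.adjoin_range_ι (ZMod 2) ℕ
  have h2 := Algebra.adjoin_eq_span (R := ZMod 2)
    (s := Set.range (FreeAlgebra.ι (ZMod 2) : ℕ → _))
  intro x _
  have hx : x ∈ Submodule.span (ZMod 2)
      (Submonoid.closure (Set.range (FreeAlgebra.ι (ZMod 2) : ℕ → _)) :
        Set (FreeAlgebra (ZMod 2) ℕ)) := by
    rw [← h2, h1]; trivial
  refine Submodule.span_le.mpr ?_ hx
  intro y hy
  have : y ∈ Set.range mon := by
    induction hy using Submonoid.closure_induction with
    | mem z hz => obtain ⟨a, rfl⟩ := hz; exact ⟨[a], by simp [mon, Q]⟩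
    | one => exact ⟨[], by simp [mon]⟩
    | mul z w _ _ hz hw =>
      obtain ⟨L, rfl⟩ := hz; obtain ⟨L', rfl⟩ := hw
      exact ⟨L ++ L', by simp [mon]⟩
  exact Submodule.subset_span this

theorem monomials_in_span_of_admissible :
    (∀ (m : ℕ) (L : List ℕ), L.length = m →
      toBehrens (mon L) ∈ Submodule.span (ZMod 2)
        {x : BehrensAlgebra | ∃ L' : List ℕ, L'.length = m ∧ Admissible L' ∧
          x = toBehrens (mon L')}) ∧
    Submodule.span (ZMod 2)
        {x : BehrensAlgebra | ∃ L' : List ℕ, Admissible L' ∧ x = toBehrens (mon L')} = ⊤ := by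
  have part1 : ∀ (m : ℕ) (L : List ℕ), L.length = m →
      toBehrens (mon L) ∈ Submodule.span (ZMod 2)
        {x : BehrensAlgebra | ∃ L' : List ℕ, L'.length = m ∧ Admissible L' ∧
          x = toBehrens (mon L')} := by
    intro m L hlen
    exact key m (wt L) ((wt L + 1) ^ m) L hlen rfl (Nat.sub_le _ _)
  refine ⟨part1, ?_⟩
  rw [eq_top_iff]
  intro x _
  obtain ⟨y, rfl⟩ := RingQuot.mkAlgHom_surjective (ZMod 2) BehrensRel x
  show (toBehrens y) ∈ _
  have hy : y ∈ Submodule.span (ZMod 2) (Set.range mon) := by rw [span_mon_top]; trivial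
  have himg : toBehrens y ∈ Submodule.span (ZMod 2)
      (toBehrens.toLinearMap '' Set.range mon) :=
    Submodule.apply_mem_span_image_of_mem_span toBehrens.toLinearMap hy
  refine Submodule.span_le.mpr ?_ himg
  rintro _ ⟨_, ⟨L, rfl⟩, rfl⟩
  have h := part1 L.length L rfl
  refine Submodule.span_mono ?_ h
  rintro z ⟨L', _, hA, hE⟩
  exact ⟨L', hA, hE⟩

end
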